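/- Suppose a nonnegative sequence (Δ_t)_{t≥0} satisfies Δ₀ ≤ 4κ² and Δ_{t+1} ≤ (t/(t+2)) Δ_t + 8κ²/(t+2)² for all t ≥ 0, for some κ > 0. Then Δ_t ≤ 8κ²/(t+2) for all t ≥ 0. -/
import Mathlib


/-- Frank–Wolfe rate recursion (inductive lemma): if `Δ₀ ≤ 4κ²` and
`Δ_{t+1} ≤ (t/(t+2)) Δ_t + 8κ²/(t+2)²`, then `Δ_t ≤ 8κ²/(t+2)` for all `t`. -/
theorem frank_wolfe_recursion (κ : ℝ) (hκ : 0 < κ) (Δ : ℕ → ℝ)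
    (hΔnonneg : ∀ t, 0 ≤ Δ t)
    (h0 : Δ 0 ≤ 4 * κ ^ 2)
    (hrec : ∀ t : ℕ, Δ (t + 1) ≤ ((t : ℝ) / (t + 2)) * Δ t + 8 * κ ^ 2 / (t + 2) ^ 2) :
    ∀ t : ℕ, Δ t ≤ 8 * κ ^ 2 / (t + 2) := by
  intro t
  induction t with
  | zero =>
    simpa using by linarith [h0]
  | succ t ih =>
    have ht : (0:ℝ) < (t:ℝ) + 2 := by positivity
    have ht3 : (0:ℝ) < (t:ℝ) + 3 := by positivity
    have hκ2 : (0:ℝ) < κ ^ 2 := by positivity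
    have h1 : Δ (t + 1) ≤ ((t : ℝ) / (t + 2)) * (8 * κ ^ 2 / (t + 2)) + 8 * κ ^ 2 / (t + 2) ^ 2 := by
      refine (hrec t).trans ?_
      gcongr
    have h2 : ((t : ℝ) / (t + 2)) * (8 * κ ^ 2 / (t + 2)) + 8 * κ ^ 2 / (t + 2) ^ 2
        = 8 * κ ^ 2 * ((t + 1) / (t + 2) ^ 2) := by
      field_simp
    have h3' : 8 * κ ^ 2 * (((t:ℝ) + 1) / ((t:ℝ) + 2) ^ 2) ≤ 8 * κ ^ 2 / ((t:ℝ) + 3) := by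
      rw [mul_div_assoc', div_le_div_iff₀ (by positivity) ht3]
      nlinarith
    push_cast
    calc Δ (t+1) ≤ _ := h1
      _ = _ := h2
      _ ≤ 8 * κ ^ 2 / ((t:ℝ) + 3) := h3'
      _ = 8 * κ ^ 2 / ((t:ℝ) + 1 + 2) := by ring_nf
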